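/- In a finite-dimensional sequential product space, every effect a has a least sharp effect above it (its ceiling ⌈a⌉) and a greatest sharp effect below it (its floor ⌊a⌋). If a = Σ_i λ_i p_i with 0 < λ_i ≤ 1 and the p_i pairwise orthogonal sharp effects, then ⌈a⌉ = Σ_i p_i, and ⌊a⌋ = 1 - ⌈1-a⌉. -/
import Mathlib


open scoped BigOperators

/-- A sequential product space: an order unit space `(V, ≤, unit)` with a binary
operation `seq` on its effects satisfying axioms (S1)-(S7). -/
structure SPS (V : Type*) [NormedAddCommGroup V] [NormedSpace ℝ V] [PartialOrder V] where
  unit : V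
  seq : V → V → V
  /-- The effects: elements `a` with `0 ≤ a ≤ unit`. -/
  Eff : V → Prop
  eff_iff : ∀ a : V, Eff a ↔ 0 ≤ a ∧ a ≤ unit
  eff_unit : Eff unit
  /-- `V` is an ordered vector space. -/
  add_le_add_right' : ∀ a b c : V, a ≤ b → a + c ≤ b + c
  smul_le_smul' : ∀ (r : ℝ) (a b : V), 0 ≤ r → a ≤ b → r • a ≤ r • b
  /-- `unit` is a strong unit. -/
  strong : ∀ a : V, ∃ n : ℕ, -((n : ℝ) • unit) ≤ a ∧ a ≤ (n : ℝ) • unit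
  /-- Archimedean property. -/
  arch : ∀ a : V, (∀ n : ℕ, a ≤ ((n : ℝ) + 1)⁻¹ • unit) → a ≤ 0
  /-- The norm of `V` is the order-unit norm. -/
  norm_def : ∀ a : V, ‖a‖ = sInf {r : ℝ | 0 ≤ r ∧ -(r • unit) ≤ a ∧ a ≤ r • unit}
  seq_eff : ∀ a b : V, Eff a → Eff b → Eff (seq a b)
  /-- (S1) additivity in the second argument. -/
  s1 : ∀ a b c : V, Eff a → Eff b → Eff c → Eff (b + c) →
      seq a (b + c) = seq a b + seq a c
  /-- (S2) norm-continuity in the first argument. -/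
  s2 : ∀ b : V, Eff b → ContinuousOn (fun a => seq a b) {a : V | Eff a}
  /-- (S3) unitality. -/
  s3 : ∀ a : V, Eff a → seq unit a = a
  /-- (S4) orthogonal effects are compatible. -/
  s4 : ∀ a b : V, Eff a → Eff b → seq a b = 0 → seq b a = 0
  /-- (S5) associativity for compatible effects. -/
  s5 : ∀ a b c : V, Eff a → Eff b → Eff c → seq a b = seq b a →
      seq a (seq b c) = seq (seq a b) c
  /-- (S6) compatibility is preserved by complements. -/
  s6a : ∀ a b : V, Eff a → Eff b → seq a b = seq b a →
      seq a (unit - b) = seq (unit - b) a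
  /-- (S6) compatibility is preserved by sums. -/
  s6b : ∀ a b c : V, Eff a → Eff b → Eff c → Eff (b + c) →
      seq a b = seq b a → seq a c = seq c a → seq a (b + c) = seq (b + c) a
  /-- (S7) compatibility is preserved by the product. -/
  s7 : ∀ a b c : V, Eff a → Eff b → Eff c →
      seq a b = seq b a → seq a c = seq c a → seq a (seq b c) = seq (seq b c) a

namespace SPS

variable {V : Type*} [NormedAddCommGroup V] [NormedSpace ℝ V] [PartialOrder V]

/-- `a` and `b` are compatible: `a & b = b & a`. -/
def Compat (S : SPS V) (a b : V) : Prop := S.seq a b = S.seq b a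

/-- An effect `p` is sharp when the only effect below both `p` and `unit - p` is `0`. -/
def Sharp (S : SPS V) (p : V) : Prop :=
  S.Eff p ∧ ∀ b : V, S.Eff b → b ≤ p → b ≤ S.unit - p → b = 0

/-- An effect `p` is sharp (idempotence formulation): `p & p = p`. -/
def SharpI (S : SPS V) (p : V) : Prop := S.Eff p ∧ S.seq p p = p

/-- An effect `p` is atomic when `p ≠ 0` and every effect below `p` is a multiple of `p`. -/
def Atomic (S : SPS V) (p : V) : Prop :=
  S.Eff p ∧ p ≠ 0 ∧ ∀ a : V, S.Eff a → a ≤ p → ∃ t : ℝ, 0 ≤ t ∧ t ≤ 1 ∧ a = t • p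

/-- `c` is the least sharp effect above `a` (the ceiling `⌈a⌉`). -/
def IsCeil (S : SPS V) (a c : V) : Prop :=
  S.SharpI c ∧ a ≤ c ∧ ∀ d : V, S.SharpI d → a ≤ d → c ≤ d

/-- `f` is the greatest sharp effect below `a` (the floor `⌊a⌋`). -/
def IsFloor (S : SPS V) (a f : V) : Prop :=
  S.SharpI f ∧ f ≤ a ∧ ∀ d : V, S.SharpI d → d ≤ a → d ≤ f

end SPS
namespace SPS

variable {V : Type*} [NormedAddCommGroup V] [NormedSpace ℝ V] [PartialOrder V]
variable (S : SPS V)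

/-! ### Order basics -/

lemma addler (S : SPS V) {a b : V} (c : V) (h : a ≤ b) : a + c ≤ b + c := S.add_le_add_right' a b c h

lemma addlel (S : SPS V) {a b : V} (c : V) (h : a ≤ b) : c + a ≤ c + b := by
  rw [add_comm c a, add_comm c b]; exact S.addler c h

lemma le_of_sub' (S : SPS V) {a b : V} (h : 0 ≤ b - a) : a ≤ b := by
  have := S.addler a h; simpa using this

lemma sub_of_le' (S : SPS V) {a b : V} (h : a ≤ b) : 0 ≤ b - a := by
  have := S.addler (-a) h; simpa [sub_eq_add_neg] using this

lemma add_le_add'' (S : SPS V) {a b c d : V} (h1 : a ≤ b) (h2 : c ≤ d) : a + c ≤ b + d :=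
  (S.addler c h1).trans (S.addlel b h2)

lemma sub_le_sub'' (S : SPS V) {a b c : V} (h : a ≤ b) : c - b ≤ c - a := by
  apply S.le_of_sub'
  have : (c - a) - (c - b) = b - a := by abel
  rw [this]; exact S.sub_of_le' h

lemma smul_nonneg'' (S : SPS V) {r : ℝ} {a : V} (hr : 0 ≤ r) (ha : 0 ≤ a) : 0 ≤ r • a := by
  have := S.smul_le_smul' r 0 a hr ha; simpa using this

/-! ### Effect basics -/

lemma eff_nonneg {a : V} (h : S.Eff a) : 0 ≤ a := ((S.eff_iff a).1 h).1
lemma eff_le_unit {a : V} (h : S.Eff a) : a ≤ S.unit := ((S.eff_iff a).1 h).2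
lemma eff_of {a : V} (h1 : 0 ≤ a) (h2 : a ≤ S.unit) : S.Eff a := (S.eff_iff a).2 ⟨h1, h2⟩

lemma eff_zero : S.Eff 0 := S.eff_of le_rfl (S.eff_nonneg S.eff_unit)

lemma unit_nonneg : (0:V) ≤ S.unit := S.eff_nonneg S.eff_unit

lemma eff_sub {a b : V} (ha : S.Eff a) (hb : S.Eff b) (h : a ≤ b) : S.Eff (b - a) :=
  S.eff_of (S.sub_of_le' h) (le_trans (S.sub_le_sub'' (S.eff_nonneg ha)) (by simpa using S.eff_le_unit hb))

lemma eff_compl {a : V} (ha : S.Eff a) : S.Eff (S.unit - a) :=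
  S.eff_sub ha S.eff_unit (S.eff_le_unit ha)

lemma eff_add_of_le {a b : V} (ha : S.Eff a) (hb : S.Eff b) (h : a ≤ S.unit - b) :
    S.Eff (a + b) := by
  refine S.eff_of (le_trans (S.eff_nonneg ha) ?_) ?_
  · have := S.addlel a (S.eff_nonneg hb); simpa using this
  · have := S.addler b h; simpa using this

lemma smul_le_self (S : SPS V) {t : ℝ} {a : V} (h1 : t ≤ 1) (ha : 0 ≤ a) : t • a ≤ a := by
  apply S.le_of_sub'
  have : a - t • a = (1 - t) • a := by rw [sub_smul, one_smul]
  rw [this]; exact S.smul_nonneg'' (by linarith) ha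

lemma eff_smul {t : ℝ} {a : V} (h0 : 0 ≤ t) (h1 : t ≤ 1) (ha : S.Eff a) : S.Eff (t • a) :=
  S.eff_of (S.smul_nonneg'' h0 (S.eff_nonneg ha))
    (le_trans (S.smul_le_self h1 (S.eff_nonneg ha)) (S.eff_le_unit ha))

/-! ### seq basics -/

lemma seq_zero_right {a : V} (ha : S.Eff a) : S.seq a 0 = 0 := by
  have h := S.s1 a 0 0 ha S.eff_zero S.eff_zero (by simpa using S.eff_zero)
  simp only [add_zero] at h
  have := congrArg (fun x => x - S.seq a 0) h
  simpa using this.symm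

lemma seq_zero_left {a : V} (ha : S.Eff a) : S.seq 0 a = 0 :=
  S.s4 a 0 ha S.eff_zero (S.seq_zero_right ha)

lemma compat_zero {a : V} (ha : S.Eff a) : S.Compat a 0 := by
  unfold Compat; rw [S.seq_zero_right ha, S.seq_zero_left ha]

lemma seq_unit_right {a : V} (ha : S.Eff a) : S.seq a S.unit = a := by
  have h := S.s6a a 0 ha S.eff_zero (S.compat_zero ha)
  rw [sub_zero] at h
  rw [h, S.s3 a ha]

lemma compat_unit {a : V} (ha : S.Eff a) : S.Compat a S.unit := by
  unfold Compat; rw [S.seq_unit_right ha, S.s3 a ha]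

lemma seq_compl_right {a b : V} (ha : S.Eff a) (hb : S.Eff b) :
    S.seq a (S.unit - b) = a - S.seq a b := by
  have hsum : b + (S.unit - b) = S.unit := by abel
  have h := S.s1 a b (S.unit - b) ha hb (S.eff_compl hb) (by rw [hsum]; exact S.eff_unit)
  rw [hsum, S.seq_unit_right ha] at h
  refine eq_sub_iff_add_eq.mpr ?_
  rw [add_comm]; exact h.symm

lemma seq_mono_right {a x y : V} (ha : S.Eff a) (hx : S.Eff x) (hy : S.Eff y) (h : x ≤ y) :
    S.seq a x ≤ S.seq a y := by
  have hyx : S.Eff (y - x) := S.eff_sub hx hy h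
  have hsum : x + (y - x) = y := by abel
  have h1 := S.s1 a x (y - x) ha hx hyx (by rw [hsum]; exact hy)
  rw [hsum] at h1
  rw [h1]
  have := S.addlel (S.seq a x) (S.eff_nonneg (S.seq_eff a (y-x) ha hyx))
  simpa using this

lemma seq_le_left {a b : V} (ha : S.Eff a) (hb : S.Eff b) : S.seq a b ≤ a := by
  have := S.seq_mono_right ha hb S.eff_unit (S.eff_le_unit hb)
  rwa [S.seq_unit_right ha] at this

lemma compat_symm {a b : V} (h : S.Compat a b) : S.Compat b a := h.symm

lemma compat_compl {a b : V} (ha : S.Eff a) (hb : S.Eff b) (h : S.Compat a b) :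
    S.Compat a (S.unit - b) := S.s6a a b ha hb h

lemma compat_of_compl {a b : V} (ha : S.Eff a) (hb : S.Eff b) (h : S.Compat a (S.unit - b)) :
    S.Compat a b := by
  have := S.s6a a (S.unit - b) ha (S.eff_compl hb) h
  rwa [sub_sub_cancel] at this

lemma compat_of_orth {a b : V} (ha : S.Eff a) (hb : S.Eff b) (h : S.seq a b = 0) :
    S.Compat a b := by
  unfold Compat; rw [h, S.s4 a b ha hb h]

/-! ### Sharp basics -/

lemma sharp_compl {p : V} (hp : S.SharpI p) : S.SharpI (S.unit - p) := by
  obtain ⟨hpe, hpp⟩ := hp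
  have hc : S.Eff (S.unit - p) := S.eff_compl hpe
  have h1 : S.seq p (S.unit - p) = 0 := by rw [S.seq_compl_right hpe hpe, hpp, sub_self]
  have h2 : S.seq (S.unit - p) p = 0 := S.s4 p (S.unit - p) hpe hc h1
  refine ⟨hc, ?_⟩
  rw [S.seq_compl_right hc hpe, h2, sub_zero]

lemma seq_sharp_compl {p : V} (hp : S.SharpI p) : S.seq p (S.unit - p) = 0 := by
  rw [S.seq_compl_right hp.1 hp.1, hp.2, sub_self]

lemma seq_compl_sharp {p : V} (hp : S.SharpI p) : S.seq (S.unit - p) p = 0 :=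
  S.s4 p (S.unit - p) hp.1 (S.eff_compl hp.1) (S.seq_sharp_compl hp)

/-- If `x ≤ d` with `d` sharp then `(1-d) & x = 0`. -/
lemma seq_compl_eq_zero_of_le {d x : V} (hd : S.SharpI d) (hx : S.Eff x) (h : x ≤ d) :
    S.seq (S.unit - d) x = 0 := by
  have hc : S.Eff (S.unit - d) := S.eff_compl hd.1
  have h1 : S.seq (S.unit - d) x ≤ 0 := by
    have := S.seq_mono_right hc hx hd.1 h
    rwa [S.seq_compl_sharp hd] at this
  exact le_antisymm h1 (S.eff_nonneg (S.seq_eff _ _ hc hx))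

/-- If `(1-d) & x = 0` with `d` sharp then `x ≤ d`. -/
lemma le_sharp_of_seq_compl_zero {d x : V} (hd : S.SharpI d) (hx : S.Eff x)
    (h : S.seq (S.unit - d) x = 0) : x ≤ d := by
  have hc : S.Eff (S.unit - d) := S.eff_compl hd.1
  have h2 : S.seq x (S.unit - d) = 0 := S.s4 (S.unit - d) x hc hx h
  have hcompat : S.Compat x d :=
    S.compat_of_compl hx hd.1 (S.compat_of_orth hx hc h2)
  have h3 : S.seq x d = x := by
    have := S.seq_compl_right hx hd.1
    rw [h2] at this
    have h4 : x - S.seq x d = 0 := this.symm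
    have := sub_eq_zero.mp h4
    exact this.symm
  calc x = S.seq x d := h3.symm
    _ = S.seq d x := hcompat
    _ ≤ d := S.seq_le_left hd.1 hx

/-- If `d ≤ x` with `d` sharp then `d & x = d` and `d` is compatible with `x`. -/
lemma sharp_le_seq {d x : V} (hd : S.SharpI d) (hx : S.Eff x) (h : d ≤ x) :
    S.seq d x = d ∧ S.Compat d x := by
  have hcx : S.Eff (S.unit - x) := S.eff_compl hx
  have h1 : S.seq d (S.unit - x) = 0 := by
    have hle : S.unit - x ≤ S.unit - d := S.sub_le_sub'' h
    have h2 := S.seq_mono_right hd.1 hcx (S.eff_compl hd.1) hle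
    rw [S.seq_sharp_compl hd] at h2
    exact le_antisymm h2 (S.eff_nonneg (S.seq_eff _ _ hd.1 hcx))
  have hcompat : S.Compat d x :=
    S.compat_of_compl hd.1 hx (S.compat_of_orth hd.1 hcx h1)
  constructor
  · rw [S.seq_compl_right hd.1 hx] at h1
    have := sub_eq_zero.mp h1
    exact this.symm
  · exact hcompat

end SPS
namespace SPS

variable {V : Type*} [NormedAddCommGroup V] [NormedSpace ℝ V] [PartialOrder V]
variable (S : SPS V)

lemma le_of_sub_nonpos (S : SPS V) {a b : V} (h : a - b ≤ 0) : a ≤ b := by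
  have := S.addler b h; simpa using this

lemma smul_mono_scalar (S : SPS V) {s t : ℝ} {a : V} (h : s ≤ t) (ha : 0 ≤ a) :
    s • a ≤ t • a := by
  apply S.le_of_sub'
  have : t • a - s • a = (t - s) • a := by rw [sub_smul]
  rw [this]; exact S.smul_nonneg'' (by linarith) ha

/-! ### Norm and order -/

lemma normSet_nonempty (S : SPS V) (z : V) :
    {r : ℝ | 0 ≤ r ∧ -(r • S.unit) ≤ z ∧ z ≤ r • S.unit}.Nonempty := by
  obtain ⟨n, h1, h2⟩ := S.strong z
  exact ⟨n, Nat.cast_nonneg n, h1, h2⟩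

lemma normSet_bddBelow (S : SPS V) (z : V) :
    BddBelow {r : ℝ | 0 ≤ r ∧ -(r • S.unit) ≤ z ∧ z ≤ r • S.unit} :=
  ⟨0, fun r hr => hr.1⟩

lemma norm_le_of_order (S : SPS V) {z : V} {r : ℝ} (hr : 0 ≤ r)
    (h1 : -(r • S.unit) ≤ z) (h2 : z ≤ r • S.unit) : ‖z‖ ≤ r := by
  rw [S.norm_def]
  exact csInf_le (S.normSet_bddBelow z) ⟨hr, h1, h2⟩

lemma le_norm_smul (S : SPS V) (z : V) : z ≤ ‖z‖ • S.unit ∧ -(‖z‖ • S.unit) ≤ z := by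
  have key : ∀ n : ℕ, ∃ r, 0 ≤ r ∧ -(r • S.unit) ≤ z ∧ z ≤ r • S.unit ∧
      r < ‖z‖ + ((n:ℝ) + 1)⁻¹ := by
    intro n
    have hpos : (0:ℝ) < ((n:ℝ) + 1)⁻¹ := by positivity
    have hlt : sInf {r : ℝ | 0 ≤ r ∧ -(r • S.unit) ≤ z ∧ z ≤ r • S.unit}
        < ‖z‖ + ((n:ℝ)+1)⁻¹ := by rw [← S.norm_def z]; linarith
    obtain ⟨r, hr, hrlt⟩ := exists_lt_of_csInf_lt (S.normSet_nonempty z) hlt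
    exact ⟨r, hr.1, hr.2.1, hr.2.2, hrlt⟩
  constructor
  · apply S.le_of_sub_nonpos
    apply S.arch
    intro n
    obtain ⟨r, hr0, _, h2, hrlt⟩ := key n
    calc z - ‖z‖ • S.unit ≤ r • S.unit - ‖z‖ • S.unit := by
          have := S.addler (-(‖z‖ • S.unit)) h2
          simpa [sub_eq_add_neg] using this
      _ = (r - ‖z‖) • S.unit := by rw [sub_smul]
      _ ≤ ((n:ℝ)+1)⁻¹ • S.unit := S.smul_mono_scalar (by linarith) S.unit_nonneg
  · apply S.le_of_sub_nonpos
    apply S.arch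
    intro n
    obtain ⟨r, hr0, h1, _, hrlt⟩ := key n
    calc -(‖z‖ • S.unit) - z ≤ -(‖z‖ • S.unit) - (-(r • S.unit)) := S.sub_le_sub'' h1
      _ = (r - ‖z‖) • S.unit := by rw [sub_smul]; abel
      _ ≤ ((n:ℝ)+1)⁻¹ • S.unit := S.smul_mono_scalar (by linarith) S.unit_nonneg

lemma le_add_norm (S : SPS V) (u v : V) : v ≤ u + ‖v - u‖ • S.unit := by
  have h := (S.le_norm_smul (v - u)).1
  calc v = (v - u) + u := by abel
    _ ≤ ‖v - u‖ • S.unit + u := S.addler u h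
    _ = u + ‖v - u‖ • S.unit := by abel

lemma sub_norm_le (S : SPS V) (u v : V) : u - ‖v - u‖ • S.unit ≤ v := by
  have h := (S.le_norm_smul (v - u)).2
  calc u - ‖v - u‖ • S.unit = -(‖v - u‖ • S.unit) + u := by abel
    _ ≤ (v - u) + u := S.addler u h
    _ = v := by abel

lemma neg_nonpos' (S : SPS V) {x : V} (h : 0 ≤ x) : -x ≤ 0 := by
  have := S.addler (-x) h; simpa using this

lemma norm_le_of_mem_interval (S : SPS V) {x : V} (h0 : 0 ≤ x) (h1 : x ≤ S.unit) :
    ‖x‖ ≤ 1 := by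
  apply S.norm_le_of_order zero_le_one
  · rw [one_smul]
    exact le_trans (S.neg_nonpos' S.unit_nonneg) h0
  · rw [one_smul]; exact h1

/-! ### Closedness of the cone and limits -/

lemma cone_closed (S : SPS V) : IsClosed {x : V | 0 ≤ x} := by
  rw [← isSeqClosed_iff_isClosed]
  intro x L hx hL
  rw [Metric.tendsto_atTop] at hL
  show 0 ≤ L
  have hneg : -L ≤ 0 := by
    apply S.arch
    intro n
    have hpos : (0:ℝ) < ((n:ℝ) + 1)⁻¹ := by positivity
    obtain ⟨k, hk⟩ := hL _ hpos
    have hk' : ‖x k - L‖ < ((n:ℝ)+1)⁻¹ := by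
      have := hk k le_rfl
      rwa [dist_eq_norm] at this
    have h2 : (0:V) ≤ L + ‖x k - L‖ • S.unit := le_trans (hx k) (S.le_add_norm L (x k))
    have h3 : -L ≤ ‖x k - L‖ • S.unit := by
      have := S.addler (-L) h2
      calc -L = 0 + -L := by abel
        _ ≤ L + ‖x k - L‖ • S.unit + -L := this
        _ = ‖x k - L‖ • S.unit := by abel
    exact le_trans h3 (S.smul_mono_scalar (le_of_lt hk') S.unit_nonneg)
  have := S.addler L hneg
  simpa using this

lemma le_of_tendsto_cone (S : SPS V) {x : ℕ → V} {L c : V}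
    (hx : Filter.Tendsto x Filter.atTop (nhds L)) (h : ∀ n, c ≤ x n) : c ≤ L := by
  have hmem : ∀ n, x n - c ∈ {y : V | 0 ≤ y} := fun n => S.sub_of_le' (h n)
  have hT : Filter.Tendsto (fun n => x n - c) Filter.atTop (nhds (L - c)) :=
    hx.sub tendsto_const_nhds
  exact S.le_of_sub' (S.cone_closed.mem_of_tendsto hT (Filter.Eventually.of_forall hmem))

lemma ge_of_tendsto_cone (S : SPS V) {x : ℕ → V} {L c : V}
    (hx : Filter.Tendsto x Filter.atTop (nhds L)) (h : ∀ n, x n ≤ c) : L ≤ c := by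
  have hmem : ∀ n, c - x n ∈ {y : V | 0 ≤ y} := fun n => S.sub_of_le' (h n)
  have hT : Filter.Tendsto (fun n => c - x n) Filter.atTop (nhds (c - L)) :=
    tendsto_const_nhds.sub hx
  exact S.le_of_sub' (S.cone_closed.mem_of_tendsto hT (Filter.Eventually.of_forall hmem))

end SPS
namespace SPS

variable {V : Type*} [NormedAddCommGroup V] [NormedSpace ℝ V] [PartialOrder V]
variable (S : SPS V)

lemma eff_isClosed (S : SPS V) : IsClosed {x : V | S.Eff x} := by
  have heq : {x : V | S.Eff x}
      = {x : V | 0 ≤ x} ∩ ((fun x => S.unit - x) ⁻¹' {y : V | 0 ≤ y}) := by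
    ext x
    simp only [Set.mem_setOf_eq, Set.mem_inter_iff, Set.mem_preimage, S.eff_iff]
    exact ⟨fun ⟨h1, h2⟩ => ⟨h1, S.sub_of_le' h2⟩, fun ⟨h1, h2⟩ => ⟨h1, S.le_of_sub' h2⟩⟩
  rw [heq]
  exact S.cone_closed.inter (S.cone_closed.preimage (continuous_const.sub continuous_id))

lemma eff_isCompact [FiniteDimensional ℝ V] (S : SPS V) : IsCompact {x : V | S.Eff x} := by
  refine (isCompact_closedBall (0:V) 1).of_isClosed_subset S.eff_isClosed ?_
  intro x hx
  simp only [Metric.mem_closedBall, dist_zero_right]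
  exact S.norm_le_of_mem_interval (S.eff_nonneg hx) (S.eff_le_unit hx)

lemma seq_nsmul (S : SPS V) {b x : V} (hb : S.Eff b) (hx : S.Eff x) :
    ∀ k : ℕ, S.Eff ((k:ℝ) • x) → S.seq b ((k:ℝ) • x) = (k:ℝ) • S.seq b x := by
  intro k
  induction k with
  | zero => intro _; simp [S.seq_zero_right hb]
  | succ k ih =>
    intro hk1
    have hcast : ((k+1 : ℕ):ℝ) • x = (k:ℝ) • x + x := by
      push_cast; rw [add_smul, one_smul]
    have hkx : S.Eff ((k:ℝ) • x) := by
      refine S.eff_of (S.smul_nonneg'' (by positivity) (S.eff_nonneg hx)) ?_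
      have hstep : (k:ℝ) • x ≤ ((k+1:ℕ):ℝ) • x :=
        S.smul_mono_scalar (by push_cast; linarith) (S.eff_nonneg hx)
      exact le_trans hstep (S.eff_le_unit hk1)
    have h1 := S.s1 b ((k:ℝ) • x) x hb hkx hx (by rw [← hcast]; exact hk1)
    rw [hcast, h1, ih hkx]
    push_cast
    rw [add_smul, one_smul]

lemma seq_unit_frac (S : SPS V) {x : V} (hx : S.Eff x) (k : ℕ) :
    S.seq x (((k:ℝ)+1)⁻¹ • S.unit) = ((k:ℝ)+1)⁻¹ • x := by
  set t : ℝ := ((k:ℝ)+1)⁻¹ with ht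
  have htpos : 0 < t := by positivity
  have htle : t ≤ 1 := by
    rw [ht]
    rw [inv_le_one_iff₀]; right; linarith [Nat.cast_nonneg (α := ℝ) k]
  have hy : S.Eff (t • S.unit) := S.eff_smul (le_of_lt htpos) htle S.eff_unit
  have hcast : ((k+1 : ℕ):ℝ) • (t • S.unit) = S.unit := by
    push_cast
    rw [smul_smul, ht, mul_inv_cancel₀ (by positivity), one_smul]
  have h := S.seq_nsmul hx hy (k+1) (by rw [hcast]; exact S.eff_unit)
  rw [hcast, S.seq_unit_right hx] at h
  have : S.seq x (t • S.unit) = ((k+1:ℕ):ℝ)⁻¹ • (((k+1:ℕ):ℝ) • S.seq x (t • S.unit)) := by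
    rw [inv_smul_smul₀ (by positivity)]
  rw [this, ← h]
  push_cast
  rfl

/-! ### Powers -/

/-- Iterated sequential powers: `pow' S a n = a & (a & (⋯ & 1))`. -/
def pow' (S : SPS V) (a : V) : ℕ → V
  | 0 => S.unit
  | (n+1) => S.seq a (pow' S a n)

variable {a : V}

lemma pow_eff (ha : S.Eff a) : ∀ n, S.Eff (S.pow' a n)
  | 0 => S.eff_unit
  | (n+1) => S.seq_eff a _ ha (pow_eff ha n)

lemma compat_pow (ha : S.Eff a) : ∀ n, S.Compat a (S.pow' a n)
  | 0 => S.compat_unit ha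
  | (n+1) => S.s7 a a (S.pow' a n) ha ha (S.pow_eff ha n) rfl (compat_pow ha n)

lemma pow_add (ha : S.Eff a) (m : ℕ) :
    ∀ n, S.seq (S.pow' a n) (S.pow' a m) = S.pow' a (n + m)
  | 0 => by
      simp only [pow']
      rw [S.s3 _ (S.pow_eff ha m)]
      congr 1
      omega
  | (n+1) => by
      have h5 := S.s5 a (S.pow' a n) (S.pow' a m) ha (S.pow_eff ha n) (S.pow_eff ha m)
        (S.compat_pow ha n)
      have : S.seq (S.pow' a (n+1)) (S.pow' a m) = S.seq a (S.pow' a (n + m)) := by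
        rw [show S.pow' a (n+1) = S.seq a (S.pow' a n) from rfl, ← h5, pow_add ha m n]
      rw [this]
      show S.seq a (S.pow' a (n+m)) = S.pow' a (n + 1 + m)
      rw [show n + 1 + m = (n + m) + 1 by omega]
      rfl

lemma pow_one' (ha : S.Eff a) : S.pow' a 1 = a := S.seq_unit_right ha

lemma pow_antitone (ha : S.Eff a) {m n : ℕ} (h : m ≤ n) : S.pow' a n ≤ S.pow' a m := by
  have := S.pow_add ha (n - m) m
  rw [show m + (n - m) = n from by omega] at this
  rw [← this]
  exact S.seq_le_left (S.pow_eff ha m) (S.pow_eff ha (n - m))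

end SPS
namespace SPS

variable {V : Type*} [NormedAddCommGroup V] [NormedSpace ℝ V] [PartialOrder V]
variable (S : SPS V)

lemma floor_exists [FiniteDimensional ℝ V] (S : SPS V) {a : V} (ha : S.Eff a) :
    ∃ f : V, S.IsFloor a f := by
  -- the sequence of powers lives in the compact set of effects
  obtain ⟨b, hbEff, φ, hφ, hφtend⟩ :=
    S.eff_isCompact.tendsto_subseq (x := fun n => S.pow' a n) (fun n => S.pow_eff ha n)
  rw [Set.mem_setOf_eq] at hbEff
  -- b is below every power
  have hble : ∀ n, b ≤ S.pow' a n := by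
    intro n
    have htail : Filter.Tendsto (fun k => S.pow' a (φ (k + n))) Filter.atTop (nhds b) :=
      hφtend.comp (Filter.tendsto_add_atTop_nat n)
    refine S.ge_of_tendsto_cone htail (fun k => ?_)
    exact S.pow_antitone ha (le_trans (Nat.le_add_left n k) (hφ.le_apply))
  -- the full sequence of powers converges to b
  have htend : Filter.Tendsto (fun n => S.pow' a n) Filter.atTop (nhds b) := by
    rw [Metric.tendsto_atTop]
    intro ε hε
    obtain ⟨K, hK⟩ := (Metric.tendsto_atTop.mp hφtend) ε hε
    refine ⟨φ K, fun m hm => ?_⟩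
    have hd : dist (S.pow' a (φ K)) b < ε := hK K le_rfl
    have hr0 : (0:ℝ) ≤ ‖S.pow' a (φ K) - b‖ := norm_nonneg _
    have h1 : S.pow' a m - b ≤ ‖S.pow' a (φ K) - b‖ • S.unit := by
      refine le_trans ?_ (S.le_norm_smul (S.pow' a (φ K) - b)).1
      have := S.addler (-b) (S.pow_antitone ha hm)
      simpa [sub_eq_add_neg] using this
    have h2 : -(‖S.pow' a (φ K) - b‖ • S.unit) ≤ S.pow' a m - b := by
      refine le_trans (S.neg_nonpos' (S.smul_nonneg'' hr0 S.unit_nonneg)) ?_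
      exact S.sub_of_le' (hble m)
    have := S.norm_le_of_order hr0 h2 h1
    rw [dist_eq_norm]
    rw [dist_eq_norm] at hd
    exact lt_of_le_of_lt this hd
  -- limit of the powers along Eff, for continuity in the first argument
  have htendIn : Filter.Tendsto (fun n => S.pow' a n) Filter.atTop (nhdsWithin b {x | S.Eff x}) := by
    rw [tendsto_nhdsWithin_iff]
    exact ⟨htend, Filter.Eventually.of_forall (fun n => S.pow_eff ha n)⟩
  have hseqtend : Filter.Tendsto (fun N => S.seq (S.pow' a N) b) Filter.atTop
      (nhds (S.seq b b)) := by
    have hcw : ContinuousWithinAt (fun x => S.seq x b) {x | S.Eff x} b :=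
      S.s2 b hbEff b hbEff
    exact hcw.tendsto.comp htendIn
  -- b is sharp
  have hbb_le : S.seq b b ≤ b := S.seq_le_left hbEff hbEff
  have hb_sharp : S.SharpI b := by
    refine ⟨hbEff, le_antisymm hbb_le ?_⟩
    apply S.le_of_sub_nonpos
    apply S.arch
    intro n
    set t : ℝ := ((n:ℝ)+1)⁻¹ with htdef
    have htpos : 0 < t := by positivity
    obtain ⟨m, hm⟩ := (Metric.tendsto_atTop.mp htend) t htpos
    have hmd : ‖S.pow' a m - b‖ < t := by
      have := hm m le_rfl; rwa [dist_eq_norm] at this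
    set e : V := S.pow' a m - b with hedef
    have heEff : S.Eff e := S.eff_sub hbEff (S.pow_eff ha m) (hble m)
    have htu : S.Eff (t • S.unit) := by
      refine S.eff_smul (le_of_lt htpos) ?_ S.eff_unit
      rw [htdef, inv_le_one_iff₀]; right; linarith [Nat.cast_nonneg (α := ℝ) n]
    have he_le : e ≤ t • S.unit :=
      le_trans (S.le_norm_smul e).1 (S.smul_mono_scalar (le_of_lt hmd) S.unit_nonneg)
    -- seq (pow N) b ≥ b - t • unit for every N
    have hlow : ∀ N, b - t • S.unit ≤ S.seq (S.pow' a N) b := by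
      intro N
      have hsum : b + e = S.pow' a m := by rw [hedef]; abel
      have hsplit := S.s1 (S.pow' a N) b e (S.pow_eff ha N) hbEff heEff
        (by rw [hsum]; exact S.pow_eff ha m)
      rw [hsum] at hsplit
      have hNm : S.seq (S.pow' a N) (S.pow' a m) = S.pow' a (N + m) := S.pow_add ha m N
      have hse : S.seq (S.pow' a N) e ≤ t • S.unit := by
        have h1 := S.seq_mono_right (S.pow_eff ha N) heEff htu he_le
        have h2 : S.seq (S.pow' a N) (t • S.unit) = t • S.pow' a N := by
          rw [htdef]; exact S.seq_unit_frac (S.pow_eff ha N) n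
        rw [h2] at h1
        exact le_trans h1 (S.smul_le_smul' t _ _ (le_of_lt htpos)
          (S.eff_le_unit (S.pow_eff ha N)))
      have key : S.pow' a (N + m) - t • S.unit ≤ S.seq (S.pow' a N) b := by
        have h3 : S.pow' a (N+m) = S.seq (S.pow' a N) b + S.seq (S.pow' a N) e := by
          rw [← hNm, hsplit]
        have h4 : S.pow' a (N+m) - S.seq (S.pow' a N) e = S.seq (S.pow' a N) b := by
          rw [h3]; abel
        exact le_of_le_of_eq (S.sub_le_sub'' (c := S.pow' a (N+m)) hse) h4
      refine le_trans ?_ key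
      have := S.addler (-(t • S.unit)) (hble (N + m))
      simpa [sub_eq_add_neg] using this
    have hfinal : b - t • S.unit ≤ S.seq b b := S.le_of_tendsto_cone hseqtend hlow
    -- rearrange
    have := S.addler (t • S.unit - S.seq b b) hfinal
    calc b - S.seq b b = (b - t • S.unit) + (t • S.unit - S.seq b b) := by abel
      _ ≤ S.seq b b + (t • S.unit - S.seq b b) := this
      _ = t • S.unit := by abel
  -- b ≤ a
  have hb_le_a : b ≤ a := by
    have := hble 1
    rwa [S.pow_one' ha] at this
  -- b is the greatest sharp effect below a
  refine ⟨b, hb_sharp, hb_le_a, ?_⟩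
  intro d hd hdle
  have hdpow : ∀ n, d ≤ S.pow' a n := by
    intro n
    induction n with
    | zero => exact S.eff_le_unit hd.1
    | succ n ih =>
      obtain ⟨hda_eq, hda_c⟩ := S.sharp_le_seq hd ha hdle
      obtain ⟨hdn_eq, hdn_c⟩ := S.sharp_le_seq hd (S.pow_eff ha n) ih
      have hcompat : S.Compat d (S.pow' a (n+1)) :=
        S.s7 d a (S.pow' a n) hd.1 ha (S.pow_eff ha n) hda_c hdn_c
      have heq : S.seq d (S.pow' a (n+1)) = d := by
        have h5 := S.s5 d a (S.pow' a n) hd.1 ha (S.pow_eff ha n) hda_c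
        calc S.seq d (S.pow' a (n+1)) = S.seq d (S.seq a (S.pow' a n)) := rfl
          _ = S.seq (S.seq d a) (S.pow' a n) := h5
          _ = S.seq d (S.pow' a n) := by rw [hda_eq]
          _ = d := hdn_eq
      calc d = S.seq d (S.pow' a (n+1)) := heq.symm
        _ = S.seq (S.pow' a (n+1)) d := hcompat
        _ ≤ S.pow' a (n+1) := S.seq_le_left (S.pow_eff ha (n+1)) hd.1
  exact S.le_of_tendsto_cone htend hdpow

end SPS
namespace SPS

variable {V : Type*} [NormedAddCommGroup V] [NormedSpace ℝ V] [PartialOrder V]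
variable (S : SPS V)

/-! ### Sums -/

lemma sum_nonneg'' (S : SPS V) {ι : Type*} {s : Finset ι} {f : ι → V}
    (h : ∀ i ∈ s, 0 ≤ f i) : 0 ≤ ∑ i ∈ s, f i := by
  induction s using Finset.cons_induction with
  | empty => simp
  | cons a s ha ih =>
    rw [Finset.sum_cons]
    have := S.add_le_add'' (h a (Finset.mem_cons_self a s))
      (ih fun i hi => h i (Finset.mem_cons_of_mem hi))
    simpa using this

lemma sum_le_sum'' (S : SPS V) {ι : Type*} {s : Finset ι} {f g : ι → V}
    (h : ∀ i ∈ s, f i ≤ g i) : ∑ i ∈ s, f i ≤ ∑ i ∈ s, g i := by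
  induction s using Finset.cons_induction with
  | empty => simp
  | cons a s ha ih =>
    rw [Finset.sum_cons, Finset.sum_cons]
    exact S.add_le_add'' (h a (Finset.mem_cons_self a s))
      (ih fun i hi => h i (Finset.mem_cons_of_mem hi))

/-! ### Orthogonal sums of sharp effects -/

lemma sharp_orth_add {p q : V} (hp : S.SharpI p) (hq : S.SharpI q)
    (h1 : S.seq p q = 0) (h2 : S.seq q p = 0) : S.SharpI (p + q) := by
  have hcpq : S.Compat p q := h1.trans h2.symm
  have hcqp : S.Compat q p := h2.trans h1.symm
  have hqle : q ≤ S.unit - p := by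
    have hc : S.Compat q (S.unit - p) := S.compat_compl hq.1 hp.1 hcqp
    have hval : S.seq q (S.unit - p) = q := by
      rw [S.seq_compl_right hq.1 hp.1, h2, sub_zero]
    calc q = S.seq q (S.unit - p) := hval.symm
      _ = S.seq (S.unit - p) q := hc
      _ ≤ S.unit - p := S.seq_le_left (S.eff_compl hp.1) hq.1
  have heff : S.Eff (p + q) := by
    rw [add_comm]
    exact S.eff_add_of_le hq.1 hp.1 hqle
  have hcq : S.Compat q (p + q) := S.s6b q p q hq.1 hp.1 hq.1 heff hcqp rfl
  have hcp : S.Compat p (p + q) := S.s6b p p q hp.1 hp.1 hq.1 heff rfl hcpq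
  refine ⟨heff, ?_⟩
  have hsplit := S.s1 (p + q) p q heff hp.1 hq.1 heff
  have e1 : S.seq (p + q) p = p := by
    rw [← hcp, S.s1 p p q hp.1 hp.1 hq.1 heff, hp.2, h1, add_zero]
  have e2 : S.seq (p + q) q = q := by
    rw [← hcq, S.s1 q p q hq.1 hp.1 hq.1 heff, hq.2, h2, zero_add]
  rw [hsplit, e1, e2]

lemma orth_sum_sharp {n : ℕ} {p : Fin n → V} (hsharp : ∀ i, S.SharpI (p i))
    (horth : ∀ i j, i ≠ j → S.seq (p i) (p j) = 0) (s : Finset (Fin n)) :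
    S.SharpI (∑ i ∈ s, p i) ∧
      ∀ j, j ∉ s → S.seq (∑ i ∈ s, p i) (p j) = 0 ∧ S.seq (p j) (∑ i ∈ s, p i) = 0 := by
  induction s using Finset.cons_induction with
  | empty =>
    refine ⟨⟨S.eff_zero, S.seq_zero_right S.eff_zero⟩, fun j _ => ?_⟩
    simp only [Finset.sum_empty]
    exact ⟨S.seq_zero_left (hsharp j).1, S.seq_zero_right (hsharp j).1⟩
  | cons i s hi ih =>
    obtain ⟨hqs, hqorth⟩ := ih
    obtain ⟨hoi1, hoi2⟩ := hqorth i hi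
    rw [Finset.sum_cons]
    have hsharpsum : S.SharpI (p i + ∑ j ∈ s, p j) :=
      S.sharp_orth_add (hsharp i) hqs hoi2 hoi1
    refine ⟨hsharpsum, fun j hj => ?_⟩
    have hji : j ≠ i := fun h => hj (h ▸ Finset.mem_cons_self i s)
    have hjs : j ∉ s := fun h => hj (Finset.mem_cons_of_mem h)
    have hz : S.seq (p j) (p i + ∑ k ∈ s, p k) = 0 := by
      rw [S.s1 (p j) (p i) _ (hsharp j).1 (hsharp i).1 hqs.1 hsharpsum.1,
        horth j i hji, (hqorth j hjs).2, add_zero]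
    exact ⟨S.s4 (p j) _ (hsharp j).1 hsharpsum.1 hz, hz⟩

/-! ### Ceiling/floor duality -/

lemma ceil_of_floor_compl {a f : V} (h : S.IsFloor (S.unit - a) f) :
    S.IsCeil a (S.unit - f) := by
  obtain ⟨hf, hfle, hfmax⟩ := h
  refine ⟨S.sharp_compl hf, ?_, ?_⟩
  · have := S.sub_le_sub'' (c := S.unit) hfle
    rwa [sub_sub_cancel] at this
  · intro d hd hled
    have h1 : S.unit - d ≤ S.unit - a := S.sub_le_sub'' hled
    have h2 : S.unit - d ≤ f := hfmax (S.unit - d) (S.sharp_compl hd) h1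
    have := S.sub_le_sub'' (c := S.unit) h2
    rwa [sub_sub_cancel] at this

lemma floor_of_ceil_compl {a c : V} (h : S.IsCeil (S.unit - a) c) :
    S.IsFloor a (S.unit - c) := by
  obtain ⟨hc, hcle, hcmin⟩ := h
  refine ⟨S.sharp_compl hc, ?_, ?_⟩
  · have := S.sub_le_sub'' (c := S.unit) hcle
    rwa [sub_sub_cancel] at this
  · intro d hd hled
    have h1 : S.unit - a ≤ S.unit - d := S.sub_le_sub'' hled
    have h2 : c ≤ S.unit - d := hcmin (S.unit - d) (S.sharp_compl hd) h1
    have := S.sub_le_sub'' (c := S.unit) h2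
    rwa [sub_sub_cancel] at this

end SPS

/-- existence of ceilings and floors, with the formulas
`⌈a⌉ = Σ p_i` for a spectral decomposition `a = Σ λ_i p_i` (`0 < λ_i ≤ 1`)
and `⌊a⌋ = 1 - ⌈1-a⌉`. -/
theorem ceil_and_floor {V : Type*} [NormedAddCommGroup V] [NormedSpace ℝ V]
    [PartialOrder V] [FiniteDimensional ℝ V] (S : SPS V) (a : V) (ha : S.Eff a) :
    (∃ c : V, S.IsCeil a c) ∧ (∃ f : V, S.IsFloor a f) ∧
      (∀ (n : ℕ) (p : Fin n → V) (l : Fin n → ℝ),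
        (∀ i, S.SharpI (p i)) → (∀ i j, i ≠ j → S.seq (p i) (p j) = 0) →
        (∀ i, 0 < l i ∧ l i ≤ 1) → a = ∑ i, l i • p i →
        S.IsCeil a (∑ i, p i)) ∧
      (∀ c : V, S.IsCeil (S.unit - a) c → S.IsFloor a (S.unit - c)) := by
  refine ⟨?_, S.floor_exists ha, ?_, fun c hc => S.floor_of_ceil_compl hc⟩
  · obtain ⟨f, hf⟩ := S.floor_exists (S.eff_compl ha)
    exact ⟨S.unit - f, S.ceil_of_floor_compl hf⟩
  · intro n p l hsharp horth hl hdecomp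
    obtain ⟨hPsharp, -⟩ := S.orth_sum_sharp hsharp horth Finset.univ
    refine ⟨hPsharp, ?_, ?_⟩
    · rw [hdecomp]
      exact S.sum_le_sum'' fun i _ => S.smul_le_self (hl i).2 (S.eff_nonneg (hsharp i).1)
    · intro d hd hled
      have hcd : S.Eff (S.unit - d) := S.eff_compl hd.1
      have hza : S.seq (S.unit - d) a = 0 := S.seq_compl_eq_zero_of_le hd ha hled
      have hpid : ∀ i, S.seq (S.unit - d) (p i) = 0 := by
        intro i
        have hlpiE : S.Eff (l i • p i) :=
          S.eff_smul (le_of_lt (hl i).1) (hl i).2 (hsharp i).1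
        have hlpile : l i • p i ≤ a := by
          rw [hdecomp]
          have hrest : 0 ≤ ∑ j ∈ Finset.univ.erase i, l j • p j :=
            S.sum_nonneg'' fun j _ =>
              S.smul_nonneg'' (le_of_lt (hl j).1) (S.eff_nonneg (hsharp j).1)
          have hsum : ∑ j, l j • p j
              = l i • p i + ∑ j ∈ Finset.univ.erase i, l j • p j :=
            (Finset.add_sum_erase _ _ (Finset.mem_univ i)).symm
          rw [hsum]
          have := S.addlel (l i • p i) hrest
          simpa using this
        have hz : S.seq (S.unit - d) (l i • p i) = 0 := by
          refine le_antisymm ?_ (S.eff_nonneg (S.seq_eff _ _ hcd hlpiE))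
          have := S.seq_mono_right hcd hlpiE ha hlpile
          rw [hza] at this; exact this
        obtain ⟨k, hk⟩ := exists_nat_one_div_lt (hl i).1
        set t : ℝ := ((k:ℝ)+1)⁻¹ with htdef
        have htpos : 0 < t := by positivity
        have htlt : t < l i := by rw [htdef, ← one_div]; exact_mod_cast hk
        have htone : t ≤ 1 := by
          rw [htdef, inv_le_one_iff₀]; right; linarith [Nat.cast_nonneg (α := ℝ) k]
        have htpE : S.Eff (t • p i) := S.eff_smul (le_of_lt htpos) htone (hsharp i).1
        have htle : t • p i ≤ l i • p i :=
          S.smul_mono_scalar (le_of_lt htlt) (S.eff_nonneg (hsharp i).1)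
        have hzt : S.seq (S.unit - d) (t • p i) = 0 := by
          refine le_antisymm ?_ (S.eff_nonneg (S.seq_eff _ _ hcd htpE))
          have := S.seq_mono_right hcd htpE hlpiE htle
          rw [hz] at this; exact this
        have hsm : ((k+1:ℕ):ℝ) • (t • p i) = p i := by
          push_cast
          rw [smul_smul, htdef, mul_inv_cancel₀ (by positivity), one_smul]
        have hfin := S.seq_nsmul hcd htpE (k+1) (by rw [hsm]; exact (hsharp i).1)
        rw [hsm, hzt, smul_zero] at hfin
        exact hfin
      have hsub : ∀ s : Finset (Fin n), (∑ i ∈ s, p i) ≤ d := by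
        intro s
        induction s using Finset.cons_induction with
        | empty => simpa using S.eff_nonneg hd.1
        | cons i s hi ihs =>
          have hqs := (S.orth_sum_sharp hsharp horth s).1
          have hconss := (S.orth_sum_sharp hsharp horth (Finset.cons i s hi)).1
          rw [Finset.sum_cons] at hconss ⊢
          have hq0 : S.seq (S.unit - d) (∑ j ∈ s, p j) = 0 :=
            S.seq_compl_eq_zero_of_le hd hqs.1 ihs
          have hsum0 : S.seq (S.unit - d) (p i + ∑ j ∈ s, p j) = 0 := by
            rw [S.s1 _ _ _ hcd (hsharp i).1 hqs.1 hconss.1, hpid i, hq0, add_zero]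
          exact S.le_sharp_of_seq_compl_zero hd hconss.1 hsum0
      exact hsub Finset.univ
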